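/- Criterion for height 0: for every rule X : ZMod n → ZMod 2, every state s : ZMod n → ZMod 2 is cyclic for X if and only if the product of matrices ∏_{i=0}^{𝔠(n)−1} C(𝔟^{ι(2,n)+i} X) equals the identity matrix over ZMod 2. -/
import Mathlib


open Matrix

/-- The discrete Baker transformation: `(𝔟 X) i = ∑_{j : 2*j = i} X j`. -/
def baker {n : ℕ} [NeZero n] (X : ZMod n → ZMod 2) : ZMod n → ZMod 2 :=
  fun i => ∑ j ∈ Finset.univ.filter (fun j : ZMod n => (2 : ZMod n) * j = i), X j


/-- The circulant matrix of a vector `X : ZMod n → ZMod 2`, with entries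
`C(X) i j = X (j - i)`. -/
def circulantVec {n : ℕ} (X : ZMod n → ZMod 2) : Matrix (ZMod n) (ZMod n) (ZMod 2) :=
  Matrix.of fun i j => X (j - i)


/-- A state `s` is cyclic for the rule `X` if some positive power of the
automaton operator `C(X)` returns `s` to itself. -/
def IsCyclicState {n : ℕ} [NeZero n] (X s : ZMod n → ZMod 2) : Prop :=
  ∃ m : ℕ, 0 < m ∧ (circulantVec X) ^ m *ᵥ s = s


/-- The critical number `𝔠(n)`. -/
noncomputable def cFun (n : ℕ) : ℕ :=
  if 1 < n / 2 ^ (padicValNat 2 n) then orderOf (2 : ZMod (n / 2 ^ (padicValNat 2 n))) else 1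

lemma zmod2_mul_self : ∀ x : ZMod 2, x * x = x := by decide

/-- Squaring a circulant over `ZMod 2` is the Baker transformation. -/
lemma circulantVec_baker {n : ℕ} [NeZero n] (X : ZMod n → ZMod 2) :
    circulantVec (baker X) = (circulantVec X) ^ 2 := by
  ext i j
  rw [pow_two, Matrix.mul_apply]
  simp only [circulantVec, baker, Matrix.of_apply]
  rw [← Finset.sum_filter_add_sum_filter_not Finset.univ
    (fun k : ZMod n => 2 * k = i + j) (fun k => X (k - i) * X (j - k))]
  have h2 : ∑ k ∈ Finset.univ.filter (fun k : ZMod n => ¬ (2 * k = i + j)),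
      X (k - i) * X (j - k) = 0 := by
    apply Finset.sum_involution (fun k _ => i + j - k)
    · intro k hk
      have e1 : i + j - k - i = j - k := by ring
      have e2 : j - (i + j - k) = k - i := by ring
      rw [e1, e2, mul_comm]
      exact CharTwo.add_self_eq_zero _
    · intro k hk _
      simp only [Finset.mem_filter, Finset.mem_univ, true_and] at hk
      intro hcon
      exact hk (by linear_combination -hcon)
    · intro k hk
      simp only [Finset.mem_filter, Finset.mem_univ, true_and] at hk ⊢
      intro hcon
      exact hk (by linear_combination -hcon)
    · intro k hk; ring
  rw [h2, add_zero]
  refine Finset.sum_bij' (fun m _ => m + i) (fun k _ => k - i) ?_ ?_ ?_ ?_ ?_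
  · intro a ha
    simp only [Finset.mem_filter, Finset.mem_univ, true_and] at ha ⊢
    linear_combination ha
  · intro a ha
    simp only [Finset.mem_filter, Finset.mem_univ, true_and] at ha ⊢
    linear_combination ha
  · intro a _; ring
  · intro a _; ring
  · intro a ha
    simp only [Finset.mem_filter, Finset.mem_univ, true_and] at ha
    have e1 : a + i - i = a := by ring
    have e2 : j - (a + i) = a := by linear_combination -ha
    simp only [e1, e2, zmod2_mul_self]

lemma baker_iterate {n : ℕ} [NeZero n] (k : ℕ) (X : ZMod n → ZMod 2) :
    baker^[k] X = fun i =>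
      ∑ j ∈ Finset.univ.filter (fun j : ZMod n => (2 : ZMod n) ^ k * j = i), X j := by
  induction k with
  | zero =>
    funext i
    simp [Finset.filter_eq']
  | succ k ih =>
    funext i
    rw [Function.iterate_succ_apply', ih]
    simp only [baker]
    rw [Finset.sum_fiberwise_eq_sum_filter Finset.univ
      (Finset.univ.filter (fun j : ZMod n => (2 : ZMod n) * j = i))
      (fun l => (2 : ZMod n) ^ k * l) X]
    apply Finset.sum_congr
    · ext l
      simp only [Finset.mem_filter, Finset.mem_univ, true_and]
      constructor
      · intro h; rw [pow_succ, mul_comm ((2:ZMod n)^k) 2, mul_assoc]; exact h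
      · intro h; rw [pow_succ, mul_comm ((2:ZMod n)^k) 2, mul_assoc] at h; exact h
    · intros; rfl

lemma circulantVec_baker_iterate {n : ℕ} [NeZero n] (k : ℕ) (X : ZMod n → ZMod 2) :
    circulantVec (baker^[k] X) = (circulantVec X) ^ (2 ^ k) := by
  induction k with
  | zero => simp
  | succ k ih =>
    rw [Function.iterate_succ_apply', circulantVec_baker, ih, ← pow_mul, pow_succ]

lemma ordfac (n : ℕ) [NeZero n] :
    2 ^ (padicValNat 2 n) * (n / 2 ^ (padicValNat 2 n)) = n := by
  rw [← Nat.factorization_def n Nat.prime_two]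
  exact Nat.ordProj_mul_ordCompl_eq_self n 2

lemma oddpart_ne_zero (n : ℕ) [NeZero n] : n / 2 ^ (padicValNat 2 n) ≠ 0 := by
  intro h0
  have := ordfac n
  rw [h0, mul_zero] at this
  exact NeZero.ne n this.symm

lemma isUnit_two_oddpart (n : ℕ) [NeZero n] :
    IsUnit (2 : ZMod (n / 2 ^ (padicValNat 2 n))) := by
  have hcop : Nat.Coprime 2 (n / 2 ^ (padicValNat 2 n)) := by
    have := Nat.coprime_ordCompl (p := 2) (n := n) Nat.prime_two (NeZero.ne n)
    rwa [Nat.factorization_def n Nat.prime_two] at this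
  have := (ZMod.isUnit_iff_coprime 2 (n / 2 ^ (padicValNat 2 n))).mpr hcop
  simpa using this

lemma cFun_pos (n : ℕ) [NeZero n] : 0 < cFun n := by
  unfold cFun
  split_ifs with h
  · obtain ⟨u, hu⟩ := isUnit_two_oddpart n
    rw [← hu, orderOf_units]
    haveI : NeZero (n / 2 ^ (padicValNat 2 n)) := ⟨oddpart_ne_zero n⟩
    exact orderOf_pos u
  · norm_num

lemma key_dvd (n : ℕ) [NeZero n] :
    (2 : ZMod n) ^ (padicValNat 2 n + cFun n) = (2 : ZMod n) ^ (padicValNat 2 n) := by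
  set ι := padicValNat 2 n with hι
  set m := n / 2 ^ ι with hm
  have hfac : 2 ^ ι * m = n := ordfac n
  have hdvd : m ∣ 2 ^ (cFun n) - 1 := by
    unfold cFun
    rw [← hι, ← hm]
    split_ifs with h
    · set c := orderOf (2 : ZMod m) with hc
      obtain ⟨u, hu⟩ := isUnit_two_oddpart n
      have hpow : (2 : ZMod m) ^ c = 1 := by
        rw [← hu, ← Units.val_pow_eq_pow_val, hc, ← hu, orderOf_units, pow_orderOf_eq_one,
          Units.val_one]
      have hcast : ((2 ^ c : ℕ) : ZMod m) = ((1 : ℕ) : ZMod m) := by push_cast; simpa using hpow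
      rw [ZMod.natCast_eq_natCast_iff] at hcast
      exact (Nat.modEq_iff_dvd' Nat.one_le_two_pow).mp hcast.symm
    · have hm0 := oddpart_ne_zero n
      rw [← hι, ← hm] at hm0
      have hm1 : m = 1 := by
        clear hfac hm
        clear_value m
        omega
      simp [hm1]
  have hn_dvd : n ∣ 2 ^ (ι + cFun n) - 2 ^ ι := by
    have heq : 2 ^ (ι + cFun n) - 2 ^ ι = 2 ^ ι * (2 ^ (cFun n) - 1) := by
      rw [pow_add, Nat.mul_sub, mul_one]
    rw [heq]
    conv_lhs => rw [← hfac]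
    exact mul_dvd_mul_left _ hdvd
  have hle : 2 ^ ι ≤ 2 ^ (ι + cFun n) := Nat.pow_le_pow_right (by norm_num) (Nat.le_add_right _ _)
  have hmodeq : (2 ^ ι : ℕ) ≡ 2 ^ (ι + cFun n) [MOD n] := (Nat.modEq_iff_dvd' hle).mpr hn_dvd
  have := (ZMod.natCast_eq_natCast_iff _ _ n).mpr hmodeq
  push_cast at this
  exact this.symm

lemma prod_eq_pow {n : ℕ} [NeZero n] (X : ZMod n → ZMod 2) (ι c : ℕ) :
    ((List.range c).map (fun i => circulantVec (baker^[ι + i] X))).prod =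
      (circulantVec X) ^ (∑ i ∈ Finset.range c, 2 ^ (ι + i)) := by
  induction c with
  | zero => simp
  | succ c ih =>
    rw [List.range_succ, List.map_append, List.prod_append, ih, Finset.sum_range_succ, pow_add]
    simp [circulantVec_baker_iterate]

lemma two_pow_add_sum (ι c : ℕ) :
    2 ^ ι + ∑ i ∈ Finset.range c, 2 ^ (ι + i) = 2 ^ (ι + c) := by
  induction c with
  | zero => simp
  | succ c ih =>
    rw [Finset.sum_range_succ, ← add_assoc, ih, ← Nat.add_assoc ι c 1, pow_add, pow_add, pow_add]
    ring

theorem height_zero_criterion {n : ℕ} [NeZero n] (X : ZMod n → ZMod 2) :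
    (∀ s : ZMod n → ZMod 2, IsCyclicState X s) ↔
      ((List.range (cFun n)).map
        (fun i => circulantVec (baker^[padicValNat 2 n + i] X))).prod = 1 := by
  set ι := padicValNat 2 n with hι
  set c := cFun n with hc
  set M := circulantVec X with hM
  set T := ∑ i ∈ Finset.range c, 2 ^ (ι + i) with hT
  have hTpos : 0 < T := by
    apply Finset.sum_pos (fun i _ => pow_pos (by norm_num) _)
    exact Finset.nonempty_range_iff.mpr (cFun_pos n).ne'
  have hkey : M ^ (2 ^ ι) * M ^ T = M ^ (2 ^ ι) := by
    rw [← pow_add, two_pow_add_sum]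
    calc M ^ 2 ^ (ι + c) = circulantVec (baker^[ι + c] X) :=
          (circulantVec_baker_iterate _ _).symm
      _ = circulantVec (baker^[ι] X) := by
          rw [baker_iterate (ι + c) X, baker_iterate ι X, hι, hc, key_dvd n]
      _ = M ^ 2 ^ ι := circulantVec_baker_iterate _ _
  rw [prod_eq_pow X ι c, ← hM, ← hT]
  constructor
  · intro hall
    have hsurj : Function.Surjective M.mulVec := by
      intro s
      obtain ⟨m, hmpos, hms⟩ := hall s
      refine ⟨M ^ (m - 1) *ᵥ s, ?_⟩
      rw [← hM] at hms
      rw [Matrix.mulVec_mulVec, ← pow_succ', Nat.sub_add_cancel hmpos]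
      exact hms
    have hu : IsUnit M := Matrix.mulVec_surjective_iff_isUnit.mp hsurj
    exact (hu.pow (2 ^ ι)).mul_left_cancel (by rw [hkey, mul_one])
  · intro h1 s
    exact ⟨T, hTpos, by rw [h1, Matrix.one_mulVec]⟩
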